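/- arXiv:1106.4591 — 2 statements merged into one kernel-verified Lean document; each statement's English description precedes it below -/
import Mathlib

section
/- Let θ̂ be an even, rapidly decaying Fourier-side solution of the SQG equation. Then the quantity Σ_{k∈ℤ², k≠0} θ̂_k(t)²/|k| is independent of t ∈ [0,∞) (conservation of the H^{−1/2} norm). -/
open scoped BigOperators

noncomputable section

/-- Euclidean norm of a lattice point `k ∈ ℤ²`. -/
def znorm (k : ℤ × ℤ) : ℝ := Real.sqrt ((k.1 : ℝ) ^ 2 + (k.2 : ℝ) ^ 2)

/-- Wedge product `l ∧ m = l₁ m₂ − l₂ m₁`. -/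
def wedge (l m : ℤ × ℤ) : ℝ := ((l.1 * m.2 - l.2 * m.1 : ℤ) : ℝ)

/-- The summand of the Fourier-side SQG nonlinearity at frequency `k`,
parametrized by `l` (with `m = k - l`); it is set to `0` unless `l ≠ 0` and `m ≠ 0`. -/
def sqgSummand (a : ℤ × ℤ → ℝ) (k l : ℤ × ℤ) : ℝ :=
  if l ≠ 0 ∧ k - l ≠ 0 then
    wedge l (k - l) * (1 / znorm l - 1 / znorm (k - l)) * a l * a (k - l)
  else 0

/-- An even, rapidly decaying Fourier-side solution of the conservative SQG equation
on `[0,∞)` (modelled as a family `θ : ℝ → ℤ² → ℝ` whose defining properties are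
imposed for `t ≥ 0`). -/
structure SQGSol where
  θ : ℝ → ℤ × ℤ → ℝ
  zero_mode : ∀ t : ℝ, 0 ≤ t → θ t 0 = 0
  /-- the nonlinearity is an absolutely convergent sum -/
  rhs_summable : ∀ t : ℝ, 0 ≤ t → ∀ k : ℤ × ℤ,
    Summable fun l : ℤ × ℤ => |sqgSummand (θ t) k l|
  /-- each `t ↦ θ̂_k(t)` is differentiable on `[0,∞)` and satisfies the SQG ODE -/
  ode : ∀ (k : ℤ × ℤ) (t : ℝ), 0 ≤ t →
    HasDerivWithinAt (fun s => θ s k)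
      ((1 / 2) * ∑' l : ℤ × ℤ, sqgSummand (θ t) k l) (Set.Ici 0) t
  /-- rapid decay: for every `T > 0` and `N ∈ ℕ`,
  `sup_{0 ≤ t ≤ T} sup_k (1+|k|)^N |θ̂_k(t)| < ∞` -/
  decay : ∀ T : ℝ, 0 < T → ∀ N : ℕ, ∃ M : ℝ,
    ∀ t ∈ Set.Icc (0 : ℝ) T, ∀ k : ℤ × ℤ, (1 + znorm k) ^ N * |θ t k| ≤ M

/-- The solution is even: `θ̂_{-k}(t) = θ̂_k(t)`. -/
def SQGSol.IsEven (Θ : SQGSol) : Prop :=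
  ∀ t : ℝ, 0 ≤ t → ∀ k : ℤ × ℤ, Θ.θ t (-k) = Θ.θ t k

/-! The derivative of `θ̂_k² / |k|` is `(θ̂_k / |k|) Σ_{l+m=k} (l ∧ m)(1/|l| − 1/|m|) θ̂_l θ̂_m`.
By evenness `θ̂_k = θ̂_{−k}`, so the total flux is a sum over triads `l + m + n = 0` of
`(l ∧ m) θ̂_l θ̂_m θ̂_n (1/(|n||l|) − 1/(|n||m|))`. The wedge is invariant under the cyclic
rotation `(l, m, n) ↦ (m, n, l)`, while the three rotations of the weight cancel, so the flux
vanishes. Rapid decay bounds all these series uniformly on bounded time intervals, which justifies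
differentiating the energy term by term. -/

lemma znorm_nonneg (k : ℤ × ℤ) : 0 ≤ znorm k := Real.sqrt_nonneg _

lemma one_add_znorm_pos (k : ℤ × ℤ) : 0 < 1 + znorm k := by linarith [znorm_nonneg k]

@[simp]
lemma znorm_neg (k : ℤ × ℤ) : znorm (-k) = znorm k := by simp [znorm]

lemma one_le_znorm {k : ℤ × ℤ} (hk : k ≠ 0) : 1 ≤ znorm k := by
  refine Real.one_le_sqrt.mpr ?_
  have : (1 : ℤ) ≤ k.1 ^ 2 + k.2 ^ 2 := by
    have : k.1 ≠ 0 ∨ k.2 ≠ 0 := by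
      by_contra! h
      exact hk (Prod.ext h.1 h.2)
    rcases this with h | h
    · nlinarith [sq_pos_of_ne_zero h, sq_nonneg k.2]
    · nlinarith [sq_pos_of_ne_zero h, sq_nonneg k.1]
  exact_mod_cast this

lemma abs_fst_le_znorm (k : ℤ × ℤ) : |(k.1 : ℝ)| ≤ znorm k :=
  Real.abs_le_sqrt (by nlinarith [sq_nonneg (k.2 : ℝ)])

lemma abs_snd_le_znorm (k : ℤ × ℤ) : |(k.2 : ℝ)| ≤ znorm k :=
  Real.abs_le_sqrt (by nlinarith [sq_nonneg (k.1 : ℝ)])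

def decayWeight (k : ℤ × ℤ) : ℝ := ((1 + znorm k) ^ 3)⁻¹

lemma decayWeight_nonneg (k : ℤ × ℤ) : 0 ≤ decayWeight k :=
  inv_nonneg.2 (pow_nonneg (one_add_znorm_pos k).le 3)

lemma decayWeight_le_one (k : ℤ × ℤ) : decayWeight k ≤ 1 :=
  inv_le_one_of_one_le₀ (one_le_pow₀ (by linarith [znorm_nonneg k]))

lemma summable_decayWeight : Summable decayWeight := by
  have hs := (EisensteinSeries.summable_one_div_norm_rpow (k := 3) (by norm_num)).comp_injective
    (finTwoArrowEquiv ℤ).symm.injective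
  refine hs.of_norm_bounded_eventually ?_
  filter_upwards [Filter.eventually_cofinite_ne 0] with k hk
  set x := (finTwoArrowEquiv ℤ).symm k
  have hx : 0 < ‖x‖ := norm_pos_iff.mpr fun h =>
    hk (by simpa [x, Prod.mk_zero_zero] using congrArg (finTwoArrowEquiv ℤ) h)
  have hxk : ‖x‖ ≤ znorm k := by
    refine (pi_norm_le_iff_of_nonneg (znorm_nonneg k)).mpr fun i => ?_
    fin_cases i
    · simpa [x, Int.norm_eq_abs] using abs_fst_le_znorm k
    · simpa [x, Int.norm_eq_abs] using abs_snd_le_znorm k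
  rw [Function.comp_apply, Real.rpow_neg (norm_nonneg _),
    Real.norm_of_nonneg (decayWeight_nonneg k), decayWeight]
  exact_mod_cast inv_anti₀ (by positivity) (pow_le_pow_left₀ hx.le (by linarith) 3)

lemma abs_div_znorm_le (x : ℝ) (k : ℤ × ℤ) : |x / znorm k| ≤ |x| := by
  rcases eq_or_ne k 0 with rfl | hk
  · simp [znorm]
  · rw [abs_div, abs_of_nonneg (znorm_nonneg k)]
    exact div_le_self (abs_nonneg x) (one_le_znorm hk)

lemma ite_ne_zero_div_znorm (x : ℝ) (k : ℤ × ℤ) :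
    (if k ≠ 0 then x / znorm k else 0) = x / znorm k := by
  split_ifs with hk
  · rfl
  · simp [not_not.mp hk, znorm]

lemma abs_wedge_le (l m : ℤ × ℤ) : |wedge l m| ≤ znorm l * znorm m := by
  rw [znorm, znorm, ← Real.sqrt_mul (by positivity)]
  refine Real.abs_le_sqrt (le_of_sub_nonneg ?_)
  have : ((l.1 : ℝ) ^ 2 + l.2 ^ 2) * (m.1 ^ 2 + m.2 ^ 2) - wedge l m ^ 2
      = (l.1 * m.1 + l.2 * m.2) ^ 2 := by
    simp only [wedge]; push_cast; ring
  rw [this]; positivity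

lemma wedge_rotate (l m : ℤ × ℤ) : wedge m (-(l + m)) = wedge l m := by
  simp only [wedge, Prod.fst_neg, Prod.snd_neg, Prod.fst_add, Prod.snd_add]; push_cast; ring

lemma wedge_rotate_symm (l m : ℤ × ℤ) : wedge (-(l + m)) l = wedge l m := by
  simp only [wedge, Prod.fst_neg, Prod.snd_neg, Prod.fst_add, Prod.snd_add]; push_cast; ring

def sqgKernel (a : ℤ × ℤ → ℝ) (l m : ℤ × ℤ) : ℝ :=
  wedge l m * (1 / znorm l - 1 / znorm m) * a l * a m

lemma sqgSummand_eq_sqgKernel (a : ℤ × ℤ → ℝ) (k l : ℤ × ℤ) :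
    sqgSummand a k l = sqgKernel a l (k - l) := by
  unfold sqgSummand sqgKernel
  split_ifs with h
  · rfl
  · rcases not_and_or.mp h with h | h <;> rw [not_not] at h <;> simp [h, wedge]

lemma abs_wedge_mul_sub_le (l m : ℤ × ℤ) :
    |wedge l m * (1 / znorm l - 1 / znorm m)| ≤ znorm l + znorm m := by
  have hl := znorm_nonneg l
  have hm := znorm_nonneg m
  have hsub : |1 / znorm l - 1 / znorm m| ≤ 1 / znorm l + 1 / znorm m := by
    rw [abs_sub_le_iff]; constructor <;> linarith [one_div_nonneg.2 hl, one_div_nonneg.2 hm]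
  calc |wedge l m * (1 / znorm l - 1 / znorm m)|
      ≤ znorm l * znorm m * (1 / znorm l + 1 / znorm m) := by
        rw [abs_mul]; gcongr; exact abs_wedge_le l m
    _ = znorm m * (znorm l / znorm l) + znorm l * (znorm m / znorm m) := by ring
    _ ≤ znorm m * 1 + znorm l * 1 := by gcongr <;> exact div_self_le_one _
    _ = znorm l + znorm m := by ring

lemma abs_sqgKernel_le (a : ℤ × ℤ → ℝ) (l m : ℤ × ℤ) :
    |sqgKernel a l m| ≤ (1 + znorm l) * |a l| * ((1 + znorm m) * |a m|) := by
  have h := abs_wedge_mul_sub_le l m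
  have hlm : znorm l + znorm m ≤ (1 + znorm l) * (1 + znorm m) := by
    nlinarith [mul_nonneg (znorm_nonneg l) (znorm_nonneg m)]
  calc |sqgKernel a l m| = |wedge l m * (1 / znorm l - 1 / znorm m)| * (|a l| * |a m|) := by
        simp only [sqgKernel, abs_mul]; ring
    _ ≤ (1 + znorm l) * (1 + znorm m) * (|a l| * |a m|) := by gcongr; exact h.trans hlm
    _ = (1 + znorm l) * |a l| * ((1 + znorm m) * |a m|) := by ring

def triad (a : ℤ × ℤ → ℝ) (p : (ℤ × ℤ) × (ℤ × ℤ)) : ℝ :=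
  a (p.1 + p.2) / znorm (p.1 + p.2) * sqgKernel a p.1 p.2

/-- The cyclic rotation `(l, m, n) ↦ (m, n, l)` of a triad `l + m + n = 0`, with `n = -(l + m)`. -/
def triadRotation : (ℤ × ℤ) × (ℤ × ℤ) ≃ (ℤ × ℤ) × (ℤ × ℤ) where
  toFun p := (p.2, -(p.1 + p.2))
  invFun p := (-(p.1 + p.2), p.1)
  left_inv p := by ext <;> simp
  right_inv p := by ext <;> simp

lemma triad_add_triad_rotation_add_triad_rotation_symm {a : ℤ × ℤ → ℝ}
    (heven : ∀ k, a (-k) = a k) (p : (ℤ × ℤ) × (ℤ × ℤ)) :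
    triad a p + triad a (triadRotation p) + triad a (triadRotation.symm p) = 0 := by
  obtain ⟨l, m⟩ := p
  have h₁ : m + -(l + m) = -l := by abel
  have h₂ : -(l + m) + l = -m := by abel
  simp only [triad, triadRotation, Equiv.coe_fn_mk, Equiv.coe_fn_symm_mk, sqgKernel, h₁, h₂,
    wedge_rotate, wedge_rotate_symm, znorm_neg, heven]
  -- a polynomial identity in the `(znorm _)⁻¹`, so vanishing frequencies need no separate case
  ring

lemma tsum_triad_eq_zero {a : ℤ × ℤ → ℝ} (heven : ∀ k, a (-k) = a k) (hs : Summable (triad a)) :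
    ∑' p, triad a p = 0 := by
  have hr : Summable fun p => triad a (triadRotation p) := triadRotation.summable_iff.mpr hs
  have hr' : Summable fun p => triad a (triadRotation.symm p) :=
    triadRotation.symm.summable_iff.mpr hs
  have h : ∑' p, (triad a p + triad a (triadRotation p) + triad a (triadRotation.symm p))
      = ∑' _ : (ℤ × ℤ) × (ℤ × ℤ), (0 : ℝ) :=
    tsum_congr (triad_add_triad_rotation_add_triad_rotation_symm heven)
  rw [tsum_zero, (hs.add hr).tsum_add hr', hs.tsum_add hr, triadRotation.tsum_eq,
    triadRotation.symm.tsum_eq] at h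
  linarith

def triadShear : (ℤ × ℤ) × (ℤ × ℤ) ≃ (ℤ × ℤ) × (ℤ × ℤ) where
  toFun p := (p.2, p.1 - p.2)
  invFun p := (p.1 + p.2, p.1)
  left_inv p := by ext <;> simp
  right_inv p := by ext <;> simp

lemma triad_triadShear (a : ℤ × ℤ → ℝ) (p : (ℤ × ℤ) × (ℤ × ℤ)) :
    triad a (triadShear p) = a p.1 / znorm p.1 * sqgSummand a p.1 p.2 := by
  simp [triad, triadShear, sqgSummand_eq_sqgKernel]

section Decay

variable {a : ℤ × ℤ → ℝ} {C : ℝ} (ha : ∀ k, (1 + znorm k) ^ 4 * |a k| ≤ C)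
include ha

lemma nonneg_of_decay : 0 ≤ C :=
  (mul_nonneg (pow_nonneg (one_add_znorm_pos 0).le 4) (abs_nonneg _)).trans (ha 0)

lemma one_add_znorm_mul_abs_le (k : ℤ × ℤ) :
    (1 + znorm k) * |a k| ≤ C * decayWeight k := by
  rw [decayWeight, le_mul_inv_iff₀ (pow_pos (one_add_znorm_pos k) 3)]
  exact (le_of_eq (by ring)).trans (ha k)

lemma abs_le_of_decay (k : ℤ × ℤ) : |a k| ≤ C * decayWeight k :=
  (le_mul_of_one_le_left (abs_nonneg _) (by linarith [znorm_nonneg k])).trans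
    (one_add_znorm_mul_abs_le ha k)

lemma abs_le_const_of_decay (k : ℤ × ℤ) : |a k| ≤ C :=
  (abs_le_of_decay ha k).trans <|
    mul_le_of_le_one_right (nonneg_of_decay ha) (decayWeight_le_one k)

lemma abs_sq_div_znorm_le (k : ℤ × ℤ) : |a k ^ 2 / znorm k| ≤ C * C * decayWeight k :=
  calc |a k ^ 2 / znorm k| ≤ |a k| * |a k| := by rw [← abs_mul, ← sq]; exact abs_div_znorm_le _ k
    _ ≤ C * (C * decayWeight k) :=
        mul_le_mul (abs_le_const_of_decay ha k) (abs_le_of_decay ha k) (abs_nonneg _)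
          (nonneg_of_decay ha)
    _ = C * C * decayWeight k := by ring

lemma abs_sqgKernel_le_of_decay (l m : ℤ × ℤ) :
    |sqgKernel a l m| ≤ C * C * (decayWeight l * decayWeight m) :=
  (abs_sqgKernel_le a l m).trans <| (mul_le_mul (one_add_znorm_mul_abs_le ha l)
    (one_add_znorm_mul_abs_le ha m) (mul_nonneg (one_add_znorm_pos m).le (abs_nonneg _))
    (mul_nonneg (nonneg_of_decay ha) (decayWeight_nonneg l))).trans_eq (by ring)

lemma abs_sqgSummand_le (k l : ℤ × ℤ) : |sqgSummand a k l| ≤ C * C * decayWeight l := by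
  rw [sqgSummand_eq_sqgKernel]
  refine (abs_sqgKernel_le_of_decay ha l (k - l)).trans <| mul_le_mul_of_nonneg_left ?_ ?_
  · exact mul_le_of_le_one_right (decayWeight_nonneg l) (decayWeight_le_one _)
  · exact mul_self_nonneg C

lemma abs_tsum_sqgSummand_le (k : ℤ × ℤ) :
    |∑' l, sqgSummand a k l| ≤ C * C * ∑' l : ℤ × ℤ, decayWeight l := by
  rw [← tsum_mul_left]
  exact tsum_of_norm_bounded (f := fun l => sqgSummand a k l)
    (summable_decayWeight.mul_left _).hasSum (abs_sqgSummand_le ha k)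

lemma abs_div_znorm_mul_tsum_sqgSummand_le (k : ℤ × ℤ) :
    |a k / znorm k * ∑' l, sqgSummand a k l|
      ≤ C ^ 3 * (∑' l : ℤ × ℤ, decayWeight l) * decayWeight k :=
  calc |a k / znorm k * ∑' l, sqgSummand a k l|
      ≤ C * decayWeight k * (C * C * ∑' l : ℤ × ℤ, decayWeight l) := by
        rw [abs_mul]
        exact mul_le_mul ((abs_div_znorm_le _ k).trans (abs_le_of_decay ha k))
          (abs_tsum_sqgSummand_le ha k) (abs_nonneg _)
          (mul_nonneg (nonneg_of_decay ha) (decayWeight_nonneg k))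
    _ = C ^ 3 * (∑' l : ℤ × ℤ, decayWeight l) * decayWeight k := by ring

lemma summable_triad : Summable (triad a) := by
  refine .of_norm_bounded ((summable_decayWeight.mul_of_nonneg summable_decayWeight
    decayWeight_nonneg decayWeight_nonneg).mul_left (C * C * C)) fun p => ?_
  calc |triad a p| ≤ |a (p.1 + p.2)| * |sqgKernel a p.1 p.2| := by
        rw [triad, abs_mul]
        exact mul_le_mul_of_nonneg_right (abs_div_znorm_le _ _) (abs_nonneg _)
    _ ≤ C * (C * C * (decayWeight p.1 * decayWeight p.2)) :=
        mul_le_mul (abs_le_const_of_decay ha _) (abs_sqgKernel_le_of_decay ha _ _) (abs_nonneg _)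
          (nonneg_of_decay ha)
    _ = C * C * C * (decayWeight p.1 * decayWeight p.2) := by ring

lemma tsum_div_znorm_mul_tsum_sqgSummand_eq_zero (heven : ∀ k, a (-k) = a k) :
    ∑' k, a k / znorm k * ∑' l, sqgSummand a k l = 0 := by
  have hs : Summable fun p : (ℤ × ℤ) × (ℤ × ℤ) => a p.1 / znorm p.1 * sqgSummand a p.1 p.2 :=
    (triadShear.summable_iff.mpr (summable_triad ha)).congr (triad_triadShear a)
  calc ∑' k, a k / znorm k * ∑' l, sqgSummand a k l
      = ∑' p : (ℤ × ℤ) × (ℤ × ℤ), a p.1 / znorm p.1 * sqgSummand a p.1 p.2 := by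
        simp_rw [← tsum_mul_left]; exact (hs.tsum_prod' hs.prod_factor).symm
    _ = ∑' p, triad a p := by simp_rw [← triad_triadShear, triadShear.tsum_eq]
    _ = 0 := tsum_triad_eq_zero heven (summable_triad ha)

end Decay

namespace SQGSol

variable (Θ : SQGSol)

def energy (t : ℝ) : ℝ := ∑' k, Θ.θ t k ^ 2 / znorm k

lemma hasDerivAt_sq_div_znorm (k : ℤ × ℤ) {t : ℝ} (ht : 0 < t) :
    HasDerivAt (fun s => Θ.θ s k ^ 2 / znorm k)
      (Θ.θ t k / znorm k * ∑' l, sqgSummand (Θ.θ t) k l) t := by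
  have h := ((Θ.ode k t ht.le).hasDerivAt (Ici_mem_nhds ht)).pow 2 |>.div_const (znorm k)
  exact h.congr_deriv (by push_cast; ring)

lemma continuousOn_energy {T : ℝ} (hT : 0 < T) : ContinuousOn Θ.energy (Set.Icc 0 T) := by
  obtain ⟨C, hC⟩ := Θ.decay T hT 4
  refine continuousOn_tsum (fun k => ?_) (summable_decayWeight.mul_left (C * C))
    fun k t ht => abs_sq_div_znorm_le (hC t ht) k
  refine ((ContinuousOn.pow (fun t ht => ?_) 2).div_const _).mono Set.Icc_subset_Ici_self
  exact (Θ.ode k t ht).continuousWithinAt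

lemma hasDerivAt_energy (hE : Θ.IsEven) {t : ℝ} (ht : 0 < t) : HasDerivAt Θ.energy 0 t := by
  obtain ⟨C, hC⟩ := Θ.decay (t + 1) (by linarith) 4
  have hdecay : ∀ s ∈ Set.Ioo 0 (t + 1), ∀ k, (1 + znorm k) ^ 4 * |Θ.θ s k| ≤ C :=
    fun s hs => hC s (Set.Ioo_subset_Icc_self hs)
  have hmem : t ∈ Set.Ioo 0 (t + 1) := ⟨ht, by linarith⟩
  have h := hasDerivAt_tsum_of_isPreconnected
    (summable_decayWeight.mul_left (C ^ 3 * ∑' l, decayWeight l)) isOpen_Ioo isPreconnected_Ioo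
    (fun k s hs => Θ.hasDerivAt_sq_div_znorm k hs.1)
    (fun k s hs => abs_div_znorm_mul_tsum_sqgSummand_le (hdecay s hs) k) hmem
    (.of_norm_bounded (summable_decayWeight.mul_left (C * C))
      (abs_sq_div_znorm_le (hdecay t hmem))) hmem
  rwa [tsum_div_znorm_mul_tsum_sqgSummand_eq_zero (hdecay t hmem) (hE t ht.le)] at h

lemma energy_eq_of_lt (hE : Θ.IsEven) {t₁ t₂ : ℝ} (h₁ : 0 ≤ t₁) (h₁₂ : t₁ < t₂) :
    Θ.energy t₁ = Θ.energy t₂ := by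
  obtain ⟨c, -, hc⟩ := exists_hasDerivAt_eq_slope Θ.energy (fun _ => 0) h₁₂
    ((Θ.continuousOn_energy (h₁.trans_lt h₁₂)).mono (Set.Icc_subset_Icc h₁ le_rfl))
    fun t ht => Θ.hasDerivAt_energy hE (h₁.trans_lt ht.1)
  rw [eq_comm, div_eq_zero_iff, sub_eq_zero, sub_eq_zero] at hc
  exact (hc.resolve_right h₁₂.ne').symm

end SQGSol

/-- Conservation of the `H^{-1/2}` norm: for an even rapidly decaying Fourier-side SQG
solution, `Σ_{k ≠ 0} θ̂_k(t)²/|k|` is independent of `t ∈ [0,∞)`. -/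
theorem sqg_hhalf_conservation (Θ : SQGSol) (hE : Θ.IsEven) :
    ∀ t₁ t₂ : ℝ, 0 ≤ t₁ → 0 ≤ t₂ →
      (∑' k : ℤ × ℤ, if k ≠ 0 then Θ.θ t₁ k ^ 2 / znorm k else 0) =
        ∑' k : ℤ × ℤ, if k ≠ 0 then Θ.θ t₂ k ^ 2 / znorm k else 0 := by
  intro t₁ t₂ h₁ h₂
  simp only [ite_ne_zero_div_znorm]
  rcases lt_trichotomy t₁ t₂ with h | rfl | h
  · exact Θ.energy_eq_of_lt hE h₁ h
  · rfl
  · exact (Θ.energy_eq_of_lt hE h₂ h).symm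
end
end

section
/- For every a : ℤ² → ℝ with Σ_{k∈ℤ²₊} |k| a_k² < ∞, the sum Σ_{k∈ℤ²₊} (k₁ + 1/2) a_k a_{k+e} converges absolutely and satisfies |Σ_{k∈ℤ²₊} (k₁ + 1/2) a_k a_{k+e}| ≤ Σ_{k∈ℤ²₊} |k| a_k². -/
open scoped BigOperators

noncomputable section

/-! Pointwise, `|(k₁ + 1/2) a_k a_{k+e}| ≤ (|k| a_k² + |k+e| a_{k+e}²) / 2` by AM-GM, because
`(k₁ + 1/2)² ≤ |k| |k+e|` as soon as `k₂² ≥ 1/4`. Summing, and using that the shift `k ↦ k + e`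
preserves the sum of `|k| a_k²` over `ℤ²₊`, gives the bound. -/

lemma sq_sq_add_half_le (s t : ℝ) (ht : 1 / 4 ≤ t ^ 2) :
    ((s + 1 / 2) ^ 2) ^ 2 ≤ (s ^ 2 + t ^ 2) * ((s + 1) ^ 2 + t ^ 2) := by
  -- the difference is `2 (s + 1/2)² (t² - 1/4) + (t² + 1/4)²`
  nlinarith [mul_nonneg (sub_nonneg.2 ht) (sq_nonneg (s + 1 / 2)), sq_nonneg (t ^ 2 + 1 / 4)]

lemma sq_add_half_le_znorm_mul_znorm_add (k : ℤ × ℤ) (hk : 1 ≤ k.2) :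
    ((k.1 : ℝ) + 1 / 2) ^ 2 ≤ znorm k * znorm (k + (1, 0)) := by
  have ht : (1 : ℝ) / 4 ≤ (k.2 : ℝ) ^ 2 := by
    have : (1 : ℝ) ≤ k.2 := by exact_mod_cast hk
    nlinarith
  have hshift : znorm (k + (1, 0)) = Real.sqrt (((k.1 : ℝ) + 1) ^ 2 + (k.2 : ℝ) ^ 2) := by
    simp [znorm]
  rw [znorm, hshift, ← Real.sqrt_mul (by positivity), Real.le_sqrt (sq_nonneg _) (by positivity)]
  exact sq_sq_add_half_le _ _ ht

lemma abs_mul_mul_le_of_sq_le_mul {c A B x y : ℝ} (hA : 0 ≤ A) (hB : 0 ≤ B) (hc : c ^ 2 ≤ A * B) :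
    |c * x * y| ≤ (A * x ^ 2 + B * y ^ 2) / 2 := by
  refine abs_le_of_sq_le_sq ?_ (by positivity)
  have hcxy : (c * x * y) ^ 2 ≤ A * B * (x * y) ^ 2 := by
    rw [show (c * x * y) ^ 2 = c ^ 2 * (x * y) ^ 2 by ring]
    exact mul_le_mul_of_nonneg_right hc (sq_nonneg _)
  nlinarith [sq_nonneg (A * x ^ 2 - B * y ^ 2)]

lemma summable_abs_and_abs_tsum_le_of_abs_le_avg_shift {G : Type*} [AddGroup G] {f g : G → ℝ}
    (v : G) (hg : Summable g) (hfg : ∀ k, |f k| ≤ (g k + g (k + v)) / 2) :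
    Summable (fun k => |f k|) ∧ |∑' k, f k| ≤ ∑' k, g k := by
  have hg_shift : Summable fun k => g (k + v) := (Equiv.addRight v).summable_iff.2 hg
  have havg : Summable fun k => (g k + g (k + v)) / 2 := (hg.add hg_shift).div_const 2
  have hf : Summable fun k => |f k| := havg.of_nonneg_of_le (fun _ => abs_nonneg _) hfg
  refine ⟨hf, ?_⟩
  calc |∑' k, f k| ≤ ∑' k, |f k| := by
        simpa only [Real.norm_eq_abs] using norm_tsum_le_tsum_norm (f := f) hf
    _ ≤ ∑' k, (g k + g (k + v)) / 2 := hf.tsum_le_tsum hfg havg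
    _ = ∑' k, g k := by
        have hshift : ∑' k, g (k + v) = ∑' k, g k := (Equiv.addRight v).tsum_eq g
        rw [tsum_div_const, hg.tsum_add hg_shift, hshift]
        ring

/-- The sum `Σ_{k∈ℤ²₊} (k₁+1/2) a_k a_{k+e}` converges absolutely and is bounded by
`Σ_{k∈ℤ²₊} |k| a_k²`. -/
theorem J_functional_bound (a : ℤ × ℤ → ℝ)
    (h : Summable fun k : ℤ × ℤ => if 1 ≤ k.2 then znorm k * a k ^ 2 else 0) :
    (Summable fun k : ℤ × ℤ =>
      if 1 ≤ k.2 then |((k.1 : ℝ) + 1 / 2) * a k * a (k + (1, 0))| else 0) ∧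
    |∑' k : ℤ × ℤ, if 1 ≤ k.2 then ((k.1 : ℝ) + 1 / 2) * a k * a (k + (1, 0)) else 0| ≤
      ∑' k : ℤ × ℤ, if 1 ≤ k.2 then znorm k * a k ^ 2 else 0 := by
  have hpoint : ∀ k : ℤ × ℤ,
      |if 1 ≤ k.2 then ((k.1 : ℝ) + 1 / 2) * a k * a (k + (1, 0)) else 0| ≤
        ((if 1 ≤ k.2 then znorm k * a k ^ 2 else 0) +
          (if 1 ≤ (k + (1, 0)).2 then znorm (k + (1, 0)) * a (k + (1, 0)) ^ 2 else 0)) / 2 := by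
    intro k
    have hk_shift : (k + (1, 0)).2 = k.2 := by simp
    rw [hk_shift]
    split_ifs with hk
    · exact abs_mul_mul_le_of_sq_le_mul (Real.sqrt_nonneg _) (Real.sqrt_nonneg _)
        (sq_add_half_le_znorm_mul_znorm_add k hk)
    · simp
  obtain ⟨hsum, hbound⟩ := summable_abs_and_abs_tsum_le_of_abs_le_avg_shift (1, 0) h hpoint
  refine ⟨?_, hbound⟩
  simpa only [apply_ite abs, abs_zero] using hsum
end
end
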